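/- Let μ be a negatively correlated distribution on size-k subsets of [n], fix i, and condition on a uniformly random element j drawn from a set A ⊆ [n]\{i} of size m being excluded (j ∉ F). Then the expected new marginal of i satisfies E_j[P_{F∼μ|j∉F}[i ∈ F]] − p_i ≤ (1/(m·(1−p^max)))·p_i, where p^max = max_ℓ p_ℓ < 1, provided [n]\(A ∪ {i}) has all covariance terms accounted for via the homogeneity identity ∑_{j∈[n]}(p_i p_j − P[i,j∈F]) = 0. -/

import Mathlib

/-- Marginal of element `i` under a distribution on subsets of `Fin n`. -/
noncomputable def marg {n : ℕ} (μ : Finset (Fin n) → ℝ) (i : Fin n) : ℝ :=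
  ∑ S ∈ Finset.univ.filter (fun S : Finset (Fin n) => i ∈ S), μ S

/-- The distribution `μ` conditioned on the event `j ∉ F`. -/
noncomputable def condOut {n : ℕ} (μ : Finset (Fin n) → ℝ) (j : Fin n)
    (S : Finset (Fin n)) : ℝ :=
  if j ∈ S then 0 else μ S / (1 - marg μ j)

/-!
Excluding `j` moves the marginal of `i` by `(pᵢ pⱼ - P[i, j ∈ F]) / (1 - pⱼ)`. Negative correlation
makes every numerator nonnegative, so the sum over `A` is at most the sum over all `j ≠ i`. For a
`k`-homogeneous distribution `∑ⱼ pⱼ = k` and `∑ⱼ P[i, j ∈ F] = k pᵢ`, so the numerators summed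
over all `j` vanish; the term `j = i` is `pᵢ² - pᵢ`, hence the sum over `j ≠ i` is
`pᵢ - pᵢ² ≤ pᵢ`. Bounding each denominator below by `1 - pmax` finishes the proof.
-/

open Finset

theorem sum_sum_filter_mem {α R : Type*} [Fintype α] [DecidableEq α] [NonAssocSemiring R]
    (s : Finset (Finset α)) (f : Finset α → R) :
    ∑ j, ∑ S ∈ s.filter (j ∈ ·), f S = ∑ S ∈ s, S.card * f S := by
  simp_rw [sum_filter]
  rw [sum_comm]
  refine sum_congr rfl fun S _ => ?_
  rw [sum_ite_mem, univ_inter, sum_const, nsmul_eq_mul]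

theorem sum_card_mul_of_card_eq {α R : Type*} [NonAssocSemiring R] {μ : Finset α → R} {k : ℕ}
    (hhom : ∀ S, μ S ≠ 0 → S.card = k) (s : Finset (Finset α)) :
    ∑ S ∈ s, S.card * μ S = k * ∑ S ∈ s, μ S := by
  rw [mul_sum]
  refine sum_congr rfl fun S _ => ?_
  by_cases h : μ S = 0
  · simp [h]
  · rw [hhom S h]

section Marginals

variable {n : ℕ} (μ : Finset (Fin n) → ℝ)

noncomputable def pairMarg (i j : Fin n) : ℝ :=
  ∑ S ∈ univ.filter (fun S : Finset (Fin n) => i ∈ S ∧ j ∈ S), μ S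

noncomputable def covGap (i j : Fin n) : ℝ :=
  marg μ i * marg μ j - pairMarg μ i j

variable {μ}

theorem pairMarg_self (i : Fin n) : pairMarg μ i i = marg μ i := by
  simp [pairMarg, marg]

theorem marg_condOut (i j : Fin n) :
    marg (condOut μ j) i = (marg μ i - pairMarg μ i j) / (1 - marg μ j) := by
  have hsplit : marg μ i - pairMarg μ i j =
      ∑ S ∈ univ.filter (i ∈ ·), if j ∈ S then 0 else μ S := by
    rw [pairMarg, ← filter_filter, sum_filter (p := (j ∈ ·)), marg, ← sum_sub_distrib]
    exact sum_congr rfl fun S _ => by split_ifs <;> simp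
  rw [hsplit, sum_div, marg]
  exact sum_congr rfl fun S _ => by unfold condOut; split_ifs <;> simp

theorem marg_condOut_sub_marg {i j : Fin n} (hj : 1 - marg μ j ≠ 0) :
    marg (condOut μ j) i - marg μ i = covGap μ i j / (1 - marg μ j) := by
  rw [marg_condOut, covGap, eq_div_iff hj]
  field_simp
  ring

theorem sum_marg_of_card_eq {k : ℕ} (hhom : ∀ S, μ S ≠ 0 → S.card = k) (hμ1 : ∑ S, μ S = 1) :
    ∑ j, marg μ j = k := by
  rw [show ∑ j, marg μ j = ∑ j, ∑ S ∈ univ.filter (j ∈ ·), μ S from rfl, sum_sum_filter_mem,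
    sum_card_mul_of_card_eq hhom, hμ1, mul_one]

theorem sum_pairMarg_of_card_eq {k : ℕ} (hhom : ∀ S, μ S ≠ 0 → S.card = k) (i : Fin n) :
    ∑ j, pairMarg μ i j = k * marg μ i := by
  simp_rw [pairMarg, ← filter_filter]
  rw [sum_sum_filter_mem, sum_card_mul_of_card_eq hhom, marg]

theorem sum_erase_covGap_of_card_eq {k : ℕ} (hhom : ∀ S, μ S ≠ 0 → S.card = k)
    (hμ1 : ∑ S, μ S = 1) (i : Fin n) :
    ∑ j ∈ univ.erase i, covGap μ i j = marg μ i - marg μ i ^ 2 := by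
  have hzero : ∑ j, covGap μ i j = 0 := by
    simp only [covGap]
    rw [sum_sub_distrib, ← mul_sum, sum_marg_of_card_eq hhom hμ1,
      sum_pairMarg_of_card_eq hhom, mul_comm, sub_self]
  rw [← add_sum_erase _ _ (mem_univ i), covGap, pairMarg_self] at hzero
  linarith

theorem sum_marg_condOut_sub_le {k : ℕ} (hhom : ∀ S, μ S ≠ 0 → S.card = k)
    (hμ1 : ∑ S, μ S = 1) {i : Fin n} (hnegcor : ∀ j, j ≠ i → pairMarg μ i j ≤ marg μ i * marg μ j)
    {pmax : ℝ} (hpmax : ∀ l, marg μ l ≤ pmax) (hpmax1 : pmax < 1)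
    {A : Finset (Fin n)} (hA : A ⊆ univ.erase i) :
    ∑ j ∈ A, (marg (condOut μ j) i - marg μ i) ≤ marg μ i / (1 - pmax) := by
  have hgap : ∀ j ∈ univ.erase i, 0 ≤ covGap μ i j := fun j hj =>
    sub_nonneg.mpr (hnegcor j (ne_of_mem_erase hj))
  have hdrift : ∀ j ∈ A, marg (condOut μ j) i - marg μ i ≤ covGap μ i j / (1 - pmax) := by
    intro j hj
    rw [marg_condOut_sub_marg (by linarith [hpmax j])]
    exact div_le_div_of_nonneg_left (hgap j (hA hj)) (by linarith) (by linarith [hpmax j])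
  calc ∑ j ∈ A, (marg (condOut μ j) i - marg μ i)
      ≤ ∑ j ∈ A, covGap μ i j / (1 - pmax) := sum_le_sum hdrift
    _ ≤ ∑ j ∈ univ.erase i, covGap μ i j / (1 - pmax) :=
        sum_le_sum_of_subset_of_nonneg hA fun j hj _ => div_nonneg (hgap j hj) (by linarith)
    _ = (marg μ i - marg μ i ^ 2) / (1 - pmax) := by
        rw [← sum_div, sum_erase_covGap_of_card_eq hhom hμ1]
    _ ≤ marg μ i / (1 - pmax) := by
        gcongr
        exact sub_le_self _ (sq_nonneg _)

end Marginals

theorem expected_drift_general (n k m : ℕ) (hm : 0 < m)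
    (μ : Finset (Fin n) → ℝ)
    (hμ1 : ∑ S : Finset (Fin n), μ S = 1)
    (hhom : ∀ S, μ S ≠ 0 → S.card = k)
    (hnegcor : ∀ i j : Fin n, i ≠ j →
      (∑ S ∈ Finset.univ.filter (fun S : Finset (Fin n) => i ∈ S ∧ j ∈ S), μ S) ≤
        marg μ i * marg μ j)
    (pmax : ℝ) (hpmax : ∀ l, marg μ l ≤ pmax) (hpmax1 : pmax < 1)
    (i : Fin n) (A : Finset (Fin n)) (hA : A ⊆ Finset.univ.erase i)
    (hAcard : A.card = m) :
    (1 / (m : ℝ)) * ∑ j ∈ A, marg (condOut μ j) i - marg μ i ≤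
      (1 / (m * (1 - pmax))) * marg μ i := by
  have hsum := sum_marg_condOut_sub_le hhom hμ1 (fun j hj => hnegcor i j hj.symm) hpmax hpmax1 hA
  rw [sum_sub_distrib, sum_const, hAcard, nsmul_eq_mul] at hsum
  have hm_pos : (0 : ℝ) < m := Nat.cast_pos.mpr hm
  calc (1 / (m : ℝ)) * ∑ j ∈ A, marg (condOut μ j) i - marg μ i
      = (1 / (m : ℝ)) * (∑ j ∈ A, marg (condOut μ j) i - m * marg μ i) := by
        field_simp
    _ ≤ (1 / (m : ℝ)) * (marg μ i / (1 - pmax)) := by gcongr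
    _ = (1 / (m * (1 - pmax))) * marg μ i := by field_simp

theorem expected_drift (n k m : ℕ) (hm : 0 < m)
    (μ : Finset (Fin n) → ℝ)
    (hμ0 : ∀ S, 0 ≤ μ S) (hμ1 : ∑ S : Finset (Fin n), μ S = 1)
    (hhom : ∀ S, μ S ≠ 0 → S.card = k)
    (hnegcor : ∀ i j : Fin n, i ≠ j →
      (∑ S ∈ Finset.univ.filter (fun S : Finset (Fin n) => i ∈ S ∧ j ∈ S), μ S) ≤
        marg μ i * marg μ j)
    (pmax : ℝ) (hpmax : ∀ l, marg μ l ≤ pmax) (hpmax1 : pmax < 1)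
    (i : Fin n) (A : Finset (Fin n)) (hA : A ⊆ Finset.univ.erase i)
    (hAcard : A.card = m) :
    (1 / (m : ℝ)) * ∑ j ∈ A, marg (condOut μ j) i - marg μ i ≤
      (1 / (m * (1 - pmax))) * marg μ i :=
  expected_drift_general n k m hm μ hμ1 hhom hnegcor pmax hpmax hpmax1 i A hA hAcard
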